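/- arXiv:2301.02599 — 11 statements merged into one kernel-verified Lean document; each statement's English description precedes it below -/
import Mathlib

section
/- For every real x > 0 with x ≠ 1 and every real p with 0 < p < 1, the Wigner–Yanase–Dyson function satisfies W_p(x,1) ≤ p(1-p)(√x - 1)² + L(x,1). -/
/-!
Put `x = e^{2s}` and `q = 1 - p`. Since `x^r - 1 = 2 e^{rs} sinh (rs)`, the common factor `e^s`
cancels and the claim becomes `pq sinh² s / (sinh (ps) sinh (qs)) ≤ 4pq sinh² (s/2) + sinh s / s`.
Writing `ps = m + d`, `qs = m - d` with `m = s/2`, this reduces to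
`(m² - d²) sinh m cosh² d ≤ m cosh m (sinh² m - sinh² d)` for `0 ≤ d ≤ m`. Both sides agree at
`d = m`, and the difference is antitone in `d` because `tanh t / t` decreases, which in turn is
the convexity of `sinh` on `[0, ∞)`.
-/

open Real

lemma convexOn_sinh_Ici : ConvexOn ℝ (Set.Ici 0) sinh := by
  refine MonotoneOn.convexOn_of_deriv (convex_Ici 0) continuous_sinh.continuousOn
    differentiable_sinh.differentiableOn ?_
  rw [Real.deriv_sinh, interior_Ici]
  intro a ha b hb hab
  rw [cosh_le_cosh, abs_of_pos ha, abs_of_pos hb]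
  exact hab

lemma mul_sinh_le_mul_sinh {y z : ℝ} (hy : 0 ≤ y) (hyz : y ≤ z) :
    z * sinh y ≤ y * sinh z := by
  rcases hy.eq_or_lt with rfl | hy
  · simp
  have hz := hy.trans_le hyz
  have h := convexOn_sinh_Ici.secant_mono Set.self_mem_Ici hy.le hz.le hy.ne' hz.ne' hyz
  simp only [sinh_zero, sub_zero] at h
  rwa [div_le_div_iff₀ hy hz, mul_comm, mul_comm (sinh z)] at h

lemma mul_cosh_mul_sinh_le {d m : ℝ} (hd : 0 ≤ d) (hdm : d ≤ m) :
    d * cosh d * sinh m ≤ m * cosh m * sinh d := by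
  have h := mul_sinh_le_mul_sinh (y := m - d) (z := m + d) (by linarith) (by linarith)
  rw [sinh_add, sinh_sub] at h
  linarith

lemma sq_sub_sq_mul_sinh_mul_cosh_sq_le {d m : ℝ} (hd : 0 ≤ d) (hdm : d ≤ m) :
    (m ^ 2 - d ^ 2) * sinh m * cosh d ^ 2 ≤ m * cosh m * (sinh m ^ 2 - sinh d ^ 2) := by
  let G : ℝ → ℝ := fun y ↦
    m * cosh m * (sinh m ^ 2 - sinh y ^ 2) - (m ^ 2 - y ^ 2) * sinh m * cosh y ^ 2
  have hG : ∀ y, HasDerivAt G (2 * cosh y *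
      (y * cosh y * sinh m - m * cosh m * sinh y - (m ^ 2 - y ^ 2) * sinh m * sinh y)) y := by
    intro y
    refine ((((hasDerivAt_sinh y).fun_pow 2).const_sub (sinh m ^ 2)).const_mul (m * cosh m)).sub
      ((((hasDerivAt_pow 2 y).const_sub (m ^ 2)).mul_const (sinh m)).mul
        ((hasDerivAt_cosh y).fun_pow 2)) |>.congr_deriv ?_
    push_cast
    ring
  have hanti : AntitoneOn G (Set.Icc 0 m) := by
    refine antitoneOn_of_hasDerivWithinAt_nonpos (convex_Icc 0 m) (by fun_prop)
      (fun y _ ↦ (hG y).hasDerivWithinAt) ?_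
    intro y hy
    rw [interior_Icc] at hy
    obtain ⟨hy0, hym⟩ := hy
    have hmono := mul_cosh_mul_sinh_le hy0.le hym.le
    have hrest : 0 ≤ (m ^ 2 - y ^ 2) * sinh m * sinh y := by
      have hsy := sinh_pos_iff.2 hy0
      have hsm := sinh_pos_iff.2 (hy0.trans hym)
      have hsq : 0 ≤ m ^ 2 - y ^ 2 := by nlinarith
      positivity
    exact mul_nonpos_of_nonneg_of_nonpos (by positivity) (by linarith)
  have h := hanti ⟨hd, hdm⟩ ⟨hd.trans hdm, le_rfl⟩ hdm
  simp only [G, sub_self, mul_zero, zero_mul] at h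
  linarith

lemma sq_sub_sq_mul_sinh_sq_mul_cosh_sq_le_of_abs_le {d m : ℝ} (hdm : |d| ≤ |m|) :
    (m ^ 2 - d ^ 2) * sinh m ^ 2 * cosh d ^ 2 ≤
      m * sinh m * cosh m * (sinh m ^ 2 - sinh d ^ 2) := by
  have h := sq_sub_sq_mul_sinh_mul_cosh_sq_le (abs_nonneg d) hdm
  rw [cosh_abs, cosh_abs, ← abs_sinh, ← abs_sinh, sq_abs, sq_abs, sq_abs, sq_abs] at h
  have hm : |m| * |sinh m| = m * sinh m := by
    rw [← abs_mul, abs_of_nonneg]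
    rcases le_total 0 m with hm | hm
    · exact mul_nonneg hm (sinh_nonneg_iff.2 hm)
    · exact mul_nonneg_of_nonpos_of_nonpos hm (sinh_nonpos_iff.2 hm)
  linear_combination |sinh m| * h + (cosh m * (sinh m ^ 2 - sinh d ^ 2)) * hm
    - ((m ^ 2 - d ^ 2) * cosh d ^ 2) * abs_mul_abs_self (sinh m)

lemma mul_sinh_sq_div_sinh_mul_sinh_le {p q s : ℝ} (hp : 0 < p) (hq : 0 < q) (hpq : p + q = 1)
    (hs : s ≠ 0) :
    p * q * sinh s ^ 2 / (sinh (p * s) * sinh (q * s)) ≤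
      4 * p * q * sinh (s / 2) ^ 2 + sinh s / s := by
  obtain ⟨m, rfl⟩ : ∃ m, s = 2 * m := ⟨s / 2, by ring⟩
  rw [mul_div_cancel_left₀ m two_ne_zero]
  obtain ⟨d, hd⟩ : ∃ d, (p - q) * m = d := ⟨_, rfl⟩
  have hm : m ≠ 0 := right_ne_zero_of_mul hs
  have hdm : |d| ≤ |m| := by
    rw [← hd, abs_mul]
    exact mul_le_of_le_one_left (abs_nonneg m) (abs_le.2 ⟨by linarith, by linarith⟩)
  have hprod : sinh (p * (2 * m)) * sinh (q * (2 * m)) = sinh m ^ 2 - sinh d ^ 2 := by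
    rw [show p * (2 * m) = m + d by linear_combination m * hpq + hd,
      show q * (2 * m) = m - d by linear_combination m * hpq - hd, sinh_add, sinh_sub]
    linear_combination sinh m ^ 2 * cosh_sq d - sinh d ^ 2 * cosh_sq m
  have hpos : 0 < sinh (p * (2 * m)) * sinh (q * (2 * m)) := by
    rcases hs.lt_or_gt with hs | hs
    · exact mul_pos_of_neg_of_neg (sinh_neg_iff.2 (mul_neg_of_pos_of_neg hp hs))
        (sinh_neg_iff.2 (mul_neg_of_pos_of_neg hq hs))
    · exact mul_pos (sinh_pos_iff.2 (mul_pos hp hs)) (sinh_pos_iff.2 (mul_pos hq hs))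
  have hpq4 : 4 * p * q * m ^ 2 = m ^ 2 - d ^ 2 := by
    linear_combination m ^ 2 * (p + q + 1) * hpq - (d + (p - q) * m) * hd
  have hm2 : 0 < m ^ 2 := by positivity
  rw [div_le_iff₀ hpos, hprod, sinh_two_mul]
  calc p * q * (2 * sinh m * cosh m) ^ 2
      = (m ^ 2 - d ^ 2) * sinh m ^ 2 * cosh m ^ 2 / m ^ 2 := by
        rw [eq_div_iff hm2.ne']
        linear_combination sinh m ^ 2 * cosh m ^ 2 * hpq4
    _ ≤ ((m ^ 2 - d ^ 2) * sinh m ^ 2 + m * sinh m * cosh m) * (sinh m ^ 2 - sinh d ^ 2) /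
          m ^ 2 := by
        refine div_le_div_of_nonneg_right ?_ hm2.le
        linear_combination sq_sub_sq_mul_sinh_sq_mul_cosh_sq_le_of_abs_le hdm
          - (m ^ 2 - d ^ 2) * sinh m ^ 2 * (cosh_sq d - cosh_sq m)
    _ = (4 * p * q * sinh m ^ 2 + 2 * sinh m * cosh m / (2 * m)) *
          (sinh m ^ 2 - sinh d ^ 2) := by
        field_simp
        linear_combination -(sinh m * (sinh m ^ 2 - sinh d ^ 2)) * hpq4

lemma rpow_sub_one_eq_two_mul_exp_mul_sinh {x : ℝ} (hx : 0 < x) (r : ℝ) :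
    x ^ r - 1 = 2 * exp (r * (log x / 2)) * sinh (r * (log x / 2)) := by
  rw [rpow_def_of_pos hx, sinh_eq, exp_neg]
  field_simp
  rw [← exp_nat_mul]
  ring_nf

theorem wyd_le_diff_log_mean (x p : ℝ) (hx : 0 < x) (hx1 : x ≠ 1)
    (hp0 : 0 < p) (hp1 : p < 1) :
    p * (1 - p) * (x - 1) ^ 2 / ((x ^ p - 1) * (x ^ (1 - p) - 1)) ≤
      p * (1 - p) * (Real.sqrt x - 1) ^ 2 + (x - 1) / Real.log x := by
  have hs : log x / 2 ≠ 0 := div_ne_zero (log_ne_zero_of_pos_of_ne_one hx hx1) two_ne_zero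
  have hsub := rpow_sub_one_eq_two_mul_exp_mul_sinh hx
  set s := log x / 2
  have h1 : x - 1 = 2 * exp s * sinh s := by simpa using hsub 1
  have hsqrt : √x - 1 = 2 * exp (s / 2) * sinh (s / 2) := by
    rw [sqrt_eq_rpow, hsub, one_div_mul_eq_div]
  have hexp : exp (p * s) * exp ((1 - p) * s) = exp s := by rw [← exp_add]; ring_nf
  have hexp2 : exp (s / 2) ^ 2 = exp s := by rw [← exp_nat_mul]; ring_nf
  rw [hsub p, hsub (1 - p), h1, hsqrt, show log x = 2 * s by ring]
  calc _ = exp s * (p * (1 - p) * sinh s ^ 2 / (sinh (p * s) * sinh ((1 - p) * s))) := by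
          rw [mul_mul_mul_comm, ← hexp]
          field_simp
    _ ≤ exp s * (4 * p * (1 - p) * sinh (s / 2) ^ 2 + sinh s / s) := by
          gcongr
          exact mul_sinh_sq_div_sinh_mul_sinh_le hp0 (sub_pos.2 hp1) (add_sub_cancel p 1) hs
    _ = _ := by
          rw [← hexp2]
          field_simp
          ring
end

section
/- For every real x > 0 with x ≠ 1 and every real p with 0 ≤ p ≤ 1, one has p(1-p)(√x - 1)² + L(x,1) ≤ (x+1)/2. -/
/-!
Write `x = s ^ 2`. Since `log (s ^ 2) = 2 log s`, the logarithmic mean factors as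
`L(s², 1) = L(s, 1) · A(s, 1)`, and the classical bound `L(s, 1) ≤ A(s, 1)` gives
`L(x, 1) ≤ A(s, 1)² = A(x, 1) - (s - 1)² / 4`.
The remaining term is absorbed because `p (1 - p) ≤ 1 / 4`.
-/

open Real

/-- `2` is the first term of the series `log ((1 + y) / (1 - y)) / y = 2 ∑ y ^ 2k / (2k+1)`,
whose terms are all nonnegative. -/
lemma two_le_log_sub_log_div {y : ℝ} (hy : |y| < 1) (hy0 : y ≠ 0) :
    2 ≤ (log (1 + y) - log (1 - y)) / y := by
  have hsum := (hasSum_log_sub_log_of_abs_lt_one hy).div_const y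
  have hterm (k : ℕ) :
      2 * (1 / (2 * k + 1)) * y ^ (2 * k + 1) / y = 2 / (2 * k + 1) * (y ^ 2) ^ k := by
    rw [pow_succ, pow_mul]
    field_simp
  simp only [hterm] at hsum
  simpa using le_hasSum hsum 0 fun k _ => by positivity

lemma log_mean_le_arith_mean {t : ℝ} (ht : 0 < t) (ht1 : t ≠ 1) :
    (t - 1) / log t ≤ (t + 1) / 2 := by
  set y := (t - 1) / (t + 1) with hy_def
  have hy : |y| < 1 := by
    rw [abs_lt, hy_def, lt_div_iff₀ (by linarith), div_lt_one (by linarith)]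
    constructor <;> linarith
  have hy0 : y ≠ 0 := div_ne_zero (sub_ne_zero.2 ht1) (by linarith)
  have hlog : log (1 + y) - log (1 - y) = log t := by
    rw [← log_div (by linarith [abs_lt.1 hy]) (by linarith [abs_lt.1 hy])]
    congr 1
    rw [hy_def]
    field_simp
    ring
  have hratio := two_le_log_sub_log_div hy hy0
  rw [hlog] at hratio
  calc (t - 1) / log t = (t + 1) / (log t / y) := by
        rw [hy_def]; field_simp
    _ ≤ (t + 1) / 2 := div_le_div_of_nonneg_left (by linarith) two_pos hratio

lemma log_mean_sq (t : ℝ) : (t ^ 2 - 1) / log (t ^ 2) = (t - 1) / log t * ((t + 1) / 2) := by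
  rw [log_pow, div_mul_div_comm]
  push_cast
  ring

theorem diff_log_mean_le_arith_general (x p : ℝ) (hx : 0 < x) (hx1 : x ≠ 1) :
    p * (1 - p) * (Real.sqrt x - 1) ^ 2 + (x - 1) / Real.log x ≤ (x + 1) / 2 := by
  obtain ⟨s, hs, rfl⟩ : ∃ s, 0 < s ∧ s ^ 2 = x := ⟨√x, sqrt_pos.2 hx, sq_sqrt hx.le⟩
  have hs1 : s ≠ 1 := by rintro rfl; simp at hx1
  have hL := mul_le_mul_of_nonneg_right (log_mean_le_arith_mean hs hs1)
    (by positivity : 0 ≤ (s + 1) / 2)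
  rw [sqrt_sq hs.le, log_mean_sq]
  linear_combination hL + (1 / 4) * mul_nonneg (sq_nonneg (2 * p - 1)) (sq_nonneg (s - 1))

theorem diff_log_mean_le_arith (x p : ℝ) (hx : 0 < x) (hx1 : x ≠ 1)
    (hp0 : 0 ≤ p) (hp1 : p ≤ 1) :
    p * (1 - p) * (Real.sqrt x - 1) ^ 2 + (x - 1) / Real.log x ≤ (x + 1) / 2 :=
  diff_log_mean_le_arith_general x p hx hx1
end

section
/- For all reals x, y > 0 with x ≠ y and every real p with 0 < p < 1, the two-variable Wigner–Yanase–Dyson function satisfies W_p(x,y) ≤ p(1-p)(√x - √y)² + L(x,y). -/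
/-!
Writing `x = exp (μ + s)` and `y = exp (μ - s)`, every term scales by `exp μ`, and with
`q = 1 - p` the inequality becomes
`p q sinh² s / (sinh (p s) sinh (q s)) ≤ p q (2 cosh s - 2) + sinh s / s`.
By the identity `sinh² (a + b) = (2 cosh (a + b) - 2) sinh a sinh b + (sinh a + sinh b)²`
this reduces, for `a = p s` and `b = q s`, to
`a b (sinh a + sinh b)² ≤ (a + b) sinh (a + b) sinh a sinh b`. Expanding `sinh (a + b)`,
each of the four terms on the left is dominated by one on the right, using only
`t ≤ sinh t` for `t ≥ 0` and `1 ≤ cosh u`.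
-/

open Real

namespace Real

theorem self_le_sinh_mul_cosh {a : ℝ} (ha : 0 ≤ a) (u : ℝ) : a ≤ sinh a * cosh u :=
  (self_le_sinh_iff.2 ha).trans <|
    le_mul_of_one_le_right (sinh_nonneg_iff.2 ha) (one_le_cosh u)

theorem mul_mul_sinh_add_sinh_sq_le {a b : ℝ} (ha : 0 ≤ a) (hb : 0 ≤ b) :
    a * b * (sinh a + sinh b) ^ 2 ≤ (a + b) * sinh (a + b) * (sinh a * sinh b) := by
  have hA : 0 ≤ sinh a := sinh_nonneg_iff.2 ha
  have hB : 0 ≤ sinh b := sinh_nonneg_iff.2 hb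
  rw [sinh_add]
  nlinarith [mul_le_mul_of_nonneg_left (self_le_sinh_mul_cosh hb b)
      (by positivity : 0 ≤ a * sinh a ^ 2),
    mul_le_mul_of_nonneg_left (self_le_sinh_mul_cosh ha a) (by positivity : 0 ≤ b * sinh b ^ 2),
    mul_le_mul_of_nonneg_left (self_le_sinh_mul_cosh ha b)
      (by positivity : 0 ≤ b * sinh a * sinh b),
    mul_le_mul_of_nonneg_left (self_le_sinh_mul_cosh hb a)
      (by positivity : 0 ≤ a * sinh a * sinh b)]

theorem sinh_add_sq (a b : ℝ) :
    sinh (a + b) ^ 2 = (2 * cosh (a + b) - 2) * (sinh a * sinh b) + (sinh a + sinh b) ^ 2 := by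
  rw [sinh_add, cosh_add]
  linear_combination sinh a ^ 2 * cosh_sq b + sinh b ^ 2 * cosh_sq a

theorem two_mul_cosh_sub_two (s : ℝ) : 2 * cosh s - 2 = 4 * sinh (s / 2) ^ 2 := by
  nth_rw 1 [← mul_div_cancel₀ s two_ne_zero, cosh_two_mul, cosh_sq]
  ring

theorem exp_add_rpow_sub_exp_sub_rpow (μ s t : ℝ) :
    exp (μ + s) ^ t - exp (μ - s) ^ t = 2 * exp (t * μ) * sinh (t * s) := by
  rw [← exp_mul, ← exp_mul, show (μ + s) * t = t * μ + t * s by ring,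
    show (μ - s) * t = t * μ + -(t * s) by ring, exp_add, exp_add, sinh_eq]
  ring

theorem mul_one_sub_mul_sinh_sq_div_le {p s : ℝ} (hp0 : 0 < p) (hp1 : p < 1) (hs : s ≠ 0) :
    p * (1 - p) * sinh s ^ 2 / (sinh (p * s) * sinh ((1 - p) * s)) ≤
      p * (1 - p) * (2 * cosh s - 2) + sinh s / s := by
  wlog hs_pos : 0 < s generalizing s
  · have := this (neg_ne_zero.2 hs) (neg_pos.2 (lt_of_le_of_ne (not_lt.1 hs_pos) hs))
    simpa only [mul_neg, neg_mul, neg_neg, sinh_neg, cosh_neg, neg_sq, neg_mul_neg,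
      neg_div_neg_eq] using this
  have hsplit : p * s + (1 - p) * s = s := by ring
  have hprod : 0 < sinh (p * s) * sinh ((1 - p) * s) :=
    mul_pos (sinh_pos_iff.2 (by positivity)) (sinh_pos_iff.2 (by nlinarith))
  have hkey := mul_mul_sinh_add_sinh_sq_le (by positivity : 0 ≤ p * s)
    (by nlinarith : 0 ≤ (1 - p) * s)
  rw [hsplit] at hkey
  have hsum : p * (1 - p) * (sinh (p * s) + sinh ((1 - p) * s)) ^ 2 ≤
      sinh s / s * (sinh (p * s) * sinh ((1 - p) * s)) := by
    rw [div_mul_eq_mul_div, le_div_iff₀ hs_pos]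
    nlinarith
  rw [← hsplit, sinh_add_sq, hsplit, div_le_iff₀ hprod]
  nlinarith

end Real

theorem wyd_exp_add_exp_sub_le {μ s p : ℝ} (hs : s ≠ 0) (hp0 : 0 < p) (hp1 : p < 1) :
    p * (1 - p) * (exp (μ + s) - exp (μ - s)) ^ 2 /
        ((exp (μ + s) ^ p - exp (μ - s) ^ p) * (exp (μ + s) ^ (1 - p) - exp (μ - s) ^ (1 - p))) ≤
      p * (1 - p) * (√(exp (μ + s)) - √(exp (μ - s))) ^ 2 +
        (exp (μ + s) - exp (μ - s)) / (log (exp (μ + s)) - log (exp (μ - s))) := by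
  have hdiff : exp (μ + s) - exp (μ - s) = 2 * exp μ * sinh s := by
    simpa only [rpow_one, one_mul] using exp_add_rpow_sub_exp_sub_rpow μ s 1
  have hsqrt : (√(exp (μ + s)) - √(exp (μ - s))) ^ 2 = exp μ * (2 * cosh s - 2) := by
    rw [sqrt_eq_rpow, sqrt_eq_rpow, exp_add_rpow_sub_exp_sub_rpow, two_mul_cosh_sub_two,
      mul_pow, mul_pow, ← exp_nat_mul]
    ring_nf
  have hexp : exp (p * μ) * exp ((1 - p) * μ) = exp μ := by rw [← exp_add]; ring_nf
  rw [exp_add_rpow_sub_exp_sub_rpow, exp_add_rpow_sub_exp_sub_rpow, hdiff, hsqrt, log_exp,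
    log_exp, show μ + s - (μ - s) = 2 * s by ring]
  calc _ = exp μ * (p * (1 - p) * sinh s ^ 2 / (sinh (p * s) * sinh ((1 - p) * s))) := by
        rw [← hexp]; field_simp
    _ ≤ exp μ * (p * (1 - p) * (2 * cosh s - 2) + sinh s / s) :=
        mul_le_mul_of_nonneg_left (mul_one_sub_mul_sinh_sq_div_le hp0 hp1 hs) (exp_pos μ).le
    _ = _ := by rw [mul_assoc 2, mul_div_mul_left _ _ two_ne_zero, mul_div_assoc]; ring

theorem wyd_two_var_le_diff_log_mean (x y p : ℝ) (hx : 0 < x) (hy : 0 < y) (hxy : x ≠ y)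
    (hp0 : 0 < p) (hp1 : p < 1) :
    p * (1 - p) * (x - y) ^ 2 / ((x ^ p - y ^ p) * (x ^ (1 - p) - y ^ (1 - p))) ≤
      p * (1 - p) * (Real.sqrt x - Real.sqrt y) ^ 2 +
        (x - y) / (Real.log x - Real.log y) := by
  have hs : (log x - log y) / 2 ≠ 0 :=
    div_ne_zero (sub_ne_zero.2 (log_injOn_pos.ne hx hy hxy)) two_ne_zero
  have h := wyd_exp_add_exp_sub_le (μ := (log x + log y) / 2) hs hp0 hp1
  rwa [show (log x + log y) / 2 + (log x - log y) / 2 = log x by ring,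
    show (log x + log y) / 2 - (log x - log y) / 2 = log y by ring, exp_log hx, exp_log hy] at h
end

section
/- For every real x > 0, one has ((√x + 1)/2)² ≥ S(√x)·√x, where S is the Specht ratio. -/
open Real

/-- The Specht ratio `S(t)`. -/
noncomputable def spechtRatio (t : ℝ) : ℝ :=
  if t = 1 then 1
  else t ^ (1 / (t - 1)) / (Real.exp 1 * ((1 / (t - 1)) * Real.log t))

/-! With `L = log t / (t - 1)` one has `S(t) = e^(L-1) / L`. For `t ≥ 1` the bounds
`2 / (t + 1) ≤ L ≤ 1` (from `2 (t-1)/(t+1) ≤ log t ≤ t - 1`) and `e^(L-1) ≤ 1 / (2 - L)` give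
`S(t) t ≤ t / (L (2 - L)) ≤ ((t + 1) / 2)²`, because `L (2 - L)` increases on `[0, 1]` and equals
`4t / (t + 1)²` at `L = 2 / (t + 1)`. The case `t < 1` follows from `S(1/t) = S(t)`. -/

lemma two_mul_sub_one_div_add_one_le_log {t : ℝ} (ht : 1 ≤ t) :
    2 * (t - 1) / (t + 1) ≤ log t := by
  have hsum := hasSum_log_one_add (sub_nonneg.mpr ht)
  rw [add_sub_cancel] at hsum
  have hx : 0 ≤ (t - 1) / (t - 1 + 2) := div_nonneg (by linarith) (by linarith)
  refine le_of_eq_of_le ?_ (le_hasSum hsum 0 fun k _ => mul_nonneg (by positivity) (pow_nonneg hx _))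
  norm_num
  ring

lemma exp_sub_one_mul_two_sub_le_one (y : ℝ) : exp (y - 1) * (2 - y) ≤ 1 := by
  calc exp (y - 1) * (2 - y) = exp (y - 1) * (1 - (y - 1)) := by ring
    _ ≤ exp (y - 1) * exp (-(y - 1)) := by gcongr; exact one_sub_le_exp_neg _
    _ = 1 := by rw [← exp_add, add_neg_cancel, exp_zero]

lemma spechtRatio_eq_exp_div {t : ℝ} (ht : 0 < t) (ht1 : t ≠ 1) :
    spechtRatio t = exp (log t / (t - 1) - 1) / (log t / (t - 1)) := by
  rw [spechtRatio, if_neg ht1, rpow_def_of_pos ht, exp_sub, div_div]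
  ring_nf

lemma spechtRatio_inv {t : ℝ} (ht : 0 < t) : spechtRatio t⁻¹ = spechtRatio t := by
  obtain rfl | ht1 := eq_or_ne t 1
  · rw [inv_one]
  have hsub : t - 1 ≠ 0 := sub_ne_zero.mpr ht1
  set L := log t / (t - 1) with hL
  have hLinv : log t⁻¹ / (t⁻¹ - 1) = t * L := by
    rw [log_inv, hL]
    field_simp
    ring
  have hexp : exp ((t - 1) * L) = t := by
    rw [hL, mul_div_cancel₀ _ hsub, exp_log ht]
  rw [spechtRatio_eq_exp_div (inv_pos.mpr ht) (inv_ne_one.mpr ht1), spechtRatio_eq_exp_div ht ht1,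
    ← hL, hLinv]
  calc exp (t * L - 1) / (t * L) = exp (L - 1) * exp ((t - 1) * L) / (t * L) := by
        rw [← exp_add]; ring_nf
    _ = exp (L - 1) / L := by rw [hexp]; field_simp

lemma spechtRatio_mul_self_le_of_one_le {t : ℝ} (ht : 1 ≤ t) :
    spechtRatio t * t ≤ ((t + 1) / 2) ^ 2 := by
  obtain rfl | ht1 := eq_or_lt_of_le ht
  · norm_num [spechtRatio]
  have hsub : 0 < t - 1 := sub_pos.mpr ht1
  set L := log t / (t - 1) with hL
  have hL1 : L ≤ 1 := (div_le_one hsub).mpr (log_le_sub_one_of_pos (by linarith))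
  have hL2 : 2 / (t + 1) ≤ L := by
    rw [hL, le_div_iff₀ hsub, div_mul_eq_mul_div]
    exact two_mul_sub_one_div_add_one_le_log ht
  have hL0 : 0 < L := lt_of_lt_of_le (by positivity) hL2
  have hprod : 4 * t ≤ (t + 1) ^ 2 * (L * (2 - L)) := by
    rw [div_le_iff₀ (by linarith)] at hL2
    nlinarith [mul_nonneg (sub_nonneg.mpr hL2) (by nlinarith : 0 ≤ 2 * t - L * (t + 1))]
  rw [spechtRatio_eq_exp_div (by linarith) ht1.ne', ← hL, div_mul_eq_mul_div, div_le_iff₀ hL0]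
  calc exp (L - 1) * t ≤ exp (L - 1) * ((t + 1) ^ 2 * (L * (2 - L)) / 4) := by gcongr; linarith
    _ = exp (L - 1) * (2 - L) * (((t + 1) / 2) ^ 2 * L) := by ring
    _ ≤ ((t + 1) / 2) ^ 2 * L :=
        mul_le_of_le_one_left (by positivity) (exp_sub_one_mul_two_sub_le_one L)

lemma spechtRatio_mul_self_le {t : ℝ} (ht : 0 < t) : spechtRatio t * t ≤ ((t + 1) / 2) ^ 2 := by
  rcases le_or_gt 1 t with ht1 | ht1
  · exact spechtRatio_mul_self_le_of_one_le ht1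
  have hinv := spechtRatio_mul_self_le_of_one_le (one_le_inv₀ ht |>.mpr ht1.le)
  calc spechtRatio t * t = spechtRatio t⁻¹ * t⁻¹ * t ^ 2 := by
        rw [spechtRatio_inv ht]; field_simp
    _ ≤ ((t⁻¹ + 1) / 2) ^ 2 * t ^ 2 := by gcongr
    _ = ((t + 1) / 2) ^ 2 := by field_simp; ring

theorem sq_avg_sqrt_ge_specht (x : ℝ) (hx : 0 < x) :
    ((Real.sqrt x + 1) / 2) ^ 2 ≥ spechtRatio (Real.sqrt x) * Real.sqrt x :=
  spechtRatio_mul_self_le (sqrt_pos.mpr hx)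
end

section
/- For every real x > 0 with x ≠ 1 and every real p with 0 < p < 1, the Wigner–Yanase–Dyson function satisfies W_p(x,1) ≤ K(x)^{p(1-p)} · L(x,1), where K is the Kantorovich constant. -/
/-!
Put `q = 1 - p` and `x = exp (2 u)`. Then `x ^ p - 1 = 2 exp (p u) sinh (p u)`, `log x = 2 u`
and `K x = cosh u ^ 2`, so the claim reduces to
`p q u sinh u ≤ cosh u ^ (2 p q) sinh (p u) sinh (q u)`.
Applying Bernoulli's inequality to each factor of Euler's product
`sinh t / t = ∏ (1 + t ^ 2 / (π n) ^ 2)` gives `(sinh u / u) ^ p ^ 2 ≤ sinh (p u) / (p u)`.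
Multiplying this by its analogue for `q` and using `p ^ 2 + q ^ 2 = 1 - 2 p q` together with
`sinh u / u ≤ cosh u` yields the reduced inequality.
-/

open Real
open Filter Topology Finset

namespace Real

theorem tendsto_euler_sinh_prod (x : ℝ) :
    Tendsto (fun n : ℕ => π * x * ∏ j ∈ range n, (1 + x ^ 2 / ((j : ℝ) + 1) ^ 2))
      atTop (𝓝 (sinh (π * x))) := by
  convert (Complex.continuous_im.tendsto _).comp (Complex.tendsto_euler_sin_prod (x * Complex.I))
    using 1
  · ext n
    have hprod : ∏ j ∈ range n, (1 - ((x : ℂ) * Complex.I) ^ 2 / ((j : ℂ) + 1) ^ 2) =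
        ((∏ j ∈ range n, (1 + x ^ 2 / ((j : ℝ) + 1) ^ 2) : ℝ) : ℂ) := by
      push_cast
      refine prod_congr rfl fun j _ => ?_
      rw [mul_pow, Complex.I_sq]
      ring
    rw [Function.comp_apply, hprod, ← mul_assoc, ← Complex.ofReal_mul,
      mul_right_comm _ Complex.I, ← Complex.ofReal_mul, Complex.mul_I_im, Complex.ofReal_re]
  · rw [← mul_assoc, ← Complex.ofReal_mul, Complex.sin_mul_I, Complex.mul_I_im,
      ← Complex.ofReal_sinh, Complex.ofReal_re]

theorem sinh_le_mul_cosh {u : ℝ} (hu : 0 ≤ u) : sinh u ≤ u * cosh u := by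
  have hderiv (t : ℝ) : HasDerivAt (fun t => t * cosh t - sinh t) (t * sinh t) t :=
    (((hasDerivAt_id' t).mul (hasDerivAt_cosh t)).sub (hasDerivAt_sinh t)).congr_deriv (by ring)
  have hmono : MonotoneOn (fun t => t * cosh t - sinh t) (Set.Ici 0) :=
    monotoneOn_of_hasDerivWithinAt_nonneg (convex_Ici 0) (by fun_prop)
      (fun t _ => (hderiv t).hasDerivWithinAt)
      (fun t ht => by
        rw [interior_Ici] at ht
        exact mul_nonneg ht.le (sinh_nonneg_iff.2 ht.le))
  simpa using hmono Set.self_mem_Ici hu hu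

theorem exp_two_mul_sub_one (a : ℝ) : exp (2 * a) - 1 = 2 * exp a * sinh a := by
  rw [sinh_eq, two_mul, exp_add, exp_neg]
  field_simp

theorem cosh_sq_eq_add_one_sq_div (u : ℝ) :
    cosh u ^ 2 = (exp (2 * u) + 1) ^ 2 / (4 * exp (2 * u)) := by
  rw [cosh_eq, two_mul, exp_add, exp_neg]
  field_simp
  ring

theorem tendsto_prod_one_add_sq_div_sq {x : ℝ} (hx : x ≠ 0) :
    Tendsto (fun n : ℕ => ∏ j ∈ range n, (1 + x ^ 2 / ((j : ℝ) + 1) ^ 2))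
      atTop (𝓝 (sinh (π * x) / (π * x))) := by
  have hπx : π * x ≠ 0 := mul_ne_zero pi_ne_zero hx
  simpa [hπx] using (tendsto_euler_sinh_prod x).div_const (π * x)

theorem sinh_div_self_rpow_sq_le {p x : ℝ} (hp0 : 0 < p) (hp1 : p ≤ 1) (hx : x ≠ 0) :
    (sinh x / x) ^ (p ^ 2) ≤ sinh (p * x) / (p * x) := by
  set t := x / π
  have ht : t ≠ 0 := div_ne_zero hx pi_ne_zero
  have hπt : π * t = x := mul_div_cancel₀ x pi_ne_zero
  have hbound (n : ℕ) : (∏ j ∈ range n, (1 + t ^ 2 / ((j : ℝ) + 1) ^ 2)) ^ (p ^ 2) ≤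
      ∏ j ∈ range n, (1 + (p * t) ^ 2 / ((j : ℝ) + 1) ^ 2) := by
    rw [← finsetProd_rpow _ _ (fun j _ => by positivity)]
    refine prod_le_prod (fun j _ => by positivity) fun j _ => ?_
    calc (1 + t ^ 2 / ((j : ℝ) + 1) ^ 2) ^ (p ^ 2)
        ≤ 1 + p ^ 2 * (t ^ 2 / ((j : ℝ) + 1) ^ 2) :=
          rpow_one_add_le_one_add_mul_self ((neg_nonpos.2 zero_le_one).trans (by positivity))
            (by positivity) (by nlinarith)
      _ = 1 + (p * t) ^ 2 / ((j : ℝ) + 1) ^ 2 := by ring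
  have hlim := le_of_tendsto_of_tendsto' ((tendsto_prod_one_add_sq_div_sq ht).rpow_const
    (Or.inr (sq_nonneg p))) (tendsto_prod_one_add_sq_div_sq (mul_ne_zero hp0.ne' ht)) hbound
  rwa [hπt, mul_left_comm, hπt] at hlim

theorem mul_mul_sinh_le_cosh_rpow_mul {p q : ℝ} (hp : 0 < p) (hq : 0 < q) (hpq : p + q = 1)
    (u : ℝ) : p * q * u * sinh u ≤ cosh u ^ (2 * (p * q)) * (sinh (p * u) * sinh (q * u)) := by
  -- both sides are even in `u`
  wlog hu : 0 < u generalizing u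
  · rcases (not_lt.1 hu).lt_or_eq with hneg | rfl
    · simpa using this (-u) (neg_pos.2 hneg)
    · simp
  set s := sinh u / u
  have hs : 0 < s := div_pos (sinh_pos_iff.2 hu) hu
  have hs_le : s ≤ cosh u := (div_le_iff₀ hu).2 (by linarith [sinh_le_mul_cosh hu.le])
  have hcosh : 0 < cosh u := cosh_pos u
  have key :
      s * cosh u ^ (-(2 * (p * q))) ≤ sinh (p * u) / (p * u) * (sinh (q * u) / (q * u)) :=
    calc s * cosh u ^ (-(2 * (p * q)))
        ≤ s * s ^ (-(2 * (p * q))) :=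
          mul_le_mul_of_nonneg_left (rpow_le_rpow_of_nonpos hs hs_le (by nlinarith)) hs.le
      _ = s ^ (p ^ 2) * s ^ (q ^ 2) := by
          rw [← rpow_add hs, ← rpow_one_add' (y := -(2 * (p * q))) hs.le (by nlinarith)]
          congr 1
          linear_combination (-(p + q + 1)) * hpq
      _ ≤ sinh (p * u) / (p * u) * (sinh (q * u) / (q * u)) :=
          mul_le_mul (sinh_div_self_rpow_sq_le hp (by linarith) hu.ne')
            (sinh_div_self_rpow_sq_le hq (by linarith) hu.ne') (by positivity)
            (by positivity)
  rw [rpow_neg hcosh.le, ← div_eq_mul_inv, div_le_iff₀ (by positivity)] at key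
  calc p * q * u * sinh u = p * q * u ^ 2 * s := by simp only [s]; field_simp
    _ ≤ p * q * u ^ 2 *
          (sinh (p * u) / (p * u) * (sinh (q * u) / (q * u)) * cosh u ^ (2 * (p * q))) := by
        gcongr
    _ = cosh u ^ (2 * (p * q)) * (sinh (p * u) * sinh (q * u)) := by
        field_simp

theorem mul_sub_one_mul_log_le {x p q : ℝ} (hx : 0 < x) (hp : 0 < p) (hq : 0 < q)
    (hpq : p + q = 1) :
    p * q * (x - 1) * log x ≤
      ((x + 1) ^ 2 / (4 * x)) ^ (p * q) * ((x ^ p - 1) * (x ^ q - 1)) := by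
  obtain ⟨u, rfl⟩ : ∃ u, x = exp (2 * u) :=
    ⟨log x / 2, by rw [mul_div_cancel₀ _ two_ne_zero, exp_log hx]⟩
  have hrpow (a : ℝ) : exp (2 * u) ^ a - 1 = 2 * exp (a * u) * sinh (a * u) := by
    rw [← exp_mul, ← exp_two_mul_sub_one]
    ring_nf
  have hexp : exp (p * u) * exp (q * u) = exp u := by
    rw [← exp_add, ← add_mul, hpq, one_mul]
  rw [hrpow, hrpow, log_exp, ← cosh_sq_eq_add_one_sq_div, exp_two_mul_sub_one, ← rpow_natCast,
    ← rpow_mul (cosh_pos u).le, Nat.cast_ofNat]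
  calc p * q * (2 * exp u * sinh u) * (2 * u) = 4 * exp u * (p * q * u * sinh u) := by ring
    _ ≤ 4 * exp u * (cosh u ^ (2 * (p * q)) * (sinh (p * u) * sinh (q * u))) :=
        mul_le_mul_of_nonneg_left (mul_mul_sinh_le_cosh_rpow_mul hp hq hpq u) (by positivity)
    _ = cosh u ^ (2 * (p * q)) *
          (2 * exp (p * u) * sinh (p * u) * (2 * exp (q * u) * sinh (q * u))) := by
        rw [← hexp]
        ring

theorem sub_one_mul_log_pos {x : ℝ} (hx : 0 < x) (hx1 : x ≠ 1) : 0 < (x - 1) * log x := by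
  rcases hx1.lt_or_gt with hlt | hgt
  · exact mul_pos_of_neg_of_neg (by linarith) (log_neg hx hlt)
  · exact mul_pos (by linarith) (log_pos hgt)

end Real

theorem wyd_le_kantorovich_log_mean (x p : ℝ) (hx : 0 < x) (hx1 : x ≠ 1)
    (hp0 : 0 < p) (hp1 : p < 1) :
    p * (1 - p) * (x - 1) ^ 2 / ((x ^ p - 1) * (x ^ (1 - p) - 1)) ≤
      ((x + 1) ^ 2 / (4 * x)) ^ (p * (1 - p)) * ((x - 1) / Real.log x) := by
  have hq : 0 < 1 - p := sub_pos.2 hp1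
  have hprod := mul_sub_one_mul_log_le hx hp0 hq (add_sub_cancel p 1)
  have hpos := sub_one_mul_log_pos hx hx1
  have hlog : log x ≠ 0 := right_ne_zero_of_mul hpos.ne'
  have hlhs : 0 < p * (1 - p) * (x - 1) * log x := by
    rw [mul_assoc]
    positivity
  have hD : 0 < (x ^ p - 1) * (x ^ (1 - p) - 1) :=
    pos_of_mul_pos_right (hlhs.trans_le hprod) (by positivity)
  have hL : 0 < (x - 1) / log x := by
    rw [← mul_div_mul_right _ _ hlog]
    exact div_pos hpos (mul_self_pos.2 hlog)
  rw [div_le_iff₀ hD]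
  calc p * (1 - p) * (x - 1) ^ 2 = p * (1 - p) * (x - 1) * log x * ((x - 1) / log x) := by
        field_simp
    _ ≤ ((x + 1) ^ 2 / (4 * x)) ^ (p * (1 - p)) * ((x ^ p - 1) * (x ^ (1 - p) - 1)) *
          ((x - 1) / log x) := by gcongr
    _ = _ := by ring
end

section
/- For every real x > 0 with x ≠ 1 and every real p with 0 < p ≤ 1/2, one has W_p(x,1) ≥ Â_p(x,1). -/
open Real

/-!
Put `a = x ^ p`, `b = x ^ (1 - p)`, so that `a * b = x`. Then
`W_p - Â_p = p (x - 1) ((1 - 2p)(x - 1) - (b - a)) / (2 (a - 1)(b - 1))`, whose denominator is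
positive. With `L = log x / 2` and `r = 1 - 2p ∈ [0, 1]` one has `x - 1 = 2 √x sinh L` and
`b - a = 2 √x sinh (r L)`, so the numerator is `4 p x sinh L (r sinh L - sinh (r L))`. This is
nonnegative because `sinh` is odd and convex on `[0, ∞)`.
-/

namespace Real

lemma convexOn_sinh_Ici : ConvexOn ℝ (Set.Ici 0) sinh := by
  refine MonotoneOn.convexOn_of_deriv (convex_Ici 0) continuous_sinh.continuousOn
    differentiable_sinh.differentiableOn ?_
  rw [deriv_sinh, interior_Ici]
  intro s hs t ht hst
  rw [cosh_le_cosh, abs_of_pos hs, abs_of_pos ht]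
  exact hst

lemma sinh_mul_le_mul_sinh {r L : ℝ} (hr0 : 0 ≤ r) (hr1 : r ≤ 1) (hL : 0 ≤ L) :
    sinh (r * L) ≤ r * sinh L := by
  simpa using convexOn_sinh_Ici.2 Set.self_mem_Ici (Set.mem_Ici.2 hL)
    (sub_nonneg.2 hr1) hr0 (sub_add_cancel 1 r)

lemma sinh_mul_sub_sinh_mul_nonneg {r : ℝ} (hr0 : 0 ≤ r) (hr1 : r ≤ 1) (L : ℝ) :
    0 ≤ sinh L * (r * sinh L - sinh (r * L)) := by
  rcases le_total 0 L with hL | hL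
  · exact mul_nonneg (sinh_nonneg_iff.2 hL) (sub_nonneg.2 (sinh_mul_le_mul_sinh hr0 hr1 hL))
  · have h := sinh_mul_le_mul_sinh hr0 hr1 (neg_nonneg.2 hL)
    rw [mul_neg, sinh_neg, sinh_neg] at h
    exact mul_nonneg_of_nonpos_of_nonpos (sinh_nonpos_iff.2 hL) (by linarith)

lemma rpow_sub_rpow_eq_mul_sinh {x : ℝ} (hx : 0 < x) (a b : ℝ) :
    x ^ a - x ^ b = 2 * x ^ ((a + b) / 2) * sinh ((a - b) / 2 * log x) := by
  rw [rpow_def_of_pos hx, rpow_def_of_pos hx, rpow_def_of_pos hx, sinh_eq,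
    mul_comm 2, mul_assoc, mul_div_cancel₀ _ two_ne_zero, mul_sub, ← exp_add, ← exp_add]
  ring_nf

lemma rpow_sub_one_mul_rpow_sub_one_pos {x p q : ℝ} (hx : 0 < x) (hx1 : x ≠ 1) (hp : 0 < p)
    (hq : 0 < q) : 0 < (x ^ p - 1) * (x ^ q - 1) := by
  rcases hx1.lt_or_gt with h | h
  · exact mul_pos_of_neg_of_neg (sub_neg.2 (rpow_lt_one hx.le h hp))
      (sub_neg.2 (rpow_lt_one hx.le h hq))
  · exact mul_pos (sub_pos.2 (one_lt_rpow h hp)) (sub_pos.2 (one_lt_rpow h hq))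

lemma sub_one_mul_sub_rpow_sub_rpow_nonneg {x p : ℝ} (hx : 0 < x) (hp0 : 0 ≤ p)
    (hp1 : p ≤ 1 / 2) : 0 ≤ (x - 1) * ((1 - 2 * p) * (x - 1) - (x ^ (1 - p) - x ^ p)) := by
  have hx_sub_one : x - 1 = 2 * x ^ (1 / 2 : ℝ) * sinh (log x / 2) := by
    simpa [div_eq_inv_mul] using rpow_sub_rpow_eq_mul_sinh hx 1 0
  have hb_sub_a : x ^ (1 - p) - x ^ p =
      2 * x ^ (1 / 2 : ℝ) * sinh ((1 - 2 * p) * (log x / 2)) := by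
    rw [rpow_sub_rpow_eq_mul_sinh hx]
    ring_nf
  rw [hx_sub_one, hb_sub_a]
  have h := sinh_mul_sub_sinh_mul_nonneg (r := 1 - 2 * p) (by linarith) (by linarith) (log x / 2)
  refine (mul_nonneg (sq_nonneg (2 * x ^ (1 / 2 : ℝ))) h).trans_eq ?_
  ring

end Real

lemma wyd_sub_hatA_eq {a b x p : ℝ} (hab : a * b = x) (ha : a - 1 ≠ 0) (hb : b - 1 ≠ 0) :
    p * (1 - p) * (x - 1) ^ 2 / ((a - 1) * (b - 1)) - p * (a + 1) * (x - 1) / (2 * (a - 1)) =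
      p * ((x - 1) * ((1 - 2 * p) * (x - 1) - (b - a))) / (2 * ((a - 1) * (b - 1))) := by
  subst hab
  field_simp
  ring

theorem wyd_ge_hatA (x p : ℝ) (hx : 0 < x) (hx1 : x ≠ 1) (hp0 : 0 < p) (hp1 : p ≤ 1 / 2) :
    p * (1 - p) * (x - 1) ^ 2 / ((x ^ p - 1) * (x ^ (1 - p) - 1)) ≥
      p * (x ^ p + 1) * (x - 1) / (2 * (x ^ p - 1)) := by
  have hden := rpow_sub_one_mul_rpow_sub_one_pos hx hx1 hp0 (by linarith : 0 < 1 - p)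
  have hab : x ^ p * x ^ (1 - p) = x := by rw [← rpow_add hx, add_sub_cancel, rpow_one]
  rw [ge_iff_le, ← sub_nonneg,
    wyd_sub_hatA_eq hab (left_ne_zero_of_mul hden.ne') (right_ne_zero_of_mul hden.ne')]
  exact div_nonneg (mul_nonneg hp0.le (sub_one_mul_sub_rpow_sub_rpow_nonneg hx hp0.le hp1))
    (by positivity)
end

section
/- For every real x > 0 with x ≠ 1, one has (L(x,1)² - x)/(2·L(x,1)²) ≤ (A(x,1) - L(x,1))/L(x,1); equivalently, 3·L(x,1) ≤ 2·A(x,1) + x/L(x,1). -/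
/-!
The rational function `3 (y² - 1) / (y² + 4y + 1)` is the `[2/2]` Padé approximant of `log`
at `1`, and `y ↦ log y - 3 (y² - 1) / (y² + 4y + 1)` is increasing on `(0, ∞)` (its derivative
is `(y - 1)⁴ / (y (y² + 4y + 1)²)`) and vanishes at `1`. This gives the upper bound
`L(x,1) ≤ (x² + 4x + 1) / (3 (x + 1))`. The quadratic `q(L) = 3L² - (x + 1) L - x` is convex
with `q(0) = -x < 0` and `q((x² + 4x + 1) / (3 (x + 1))) = -x (x - 1)² / (3 (x + 1)²) ≤ 0`,
so `q(L(x,1)) ≤ 0`, which is both inequalities after clearing denominators.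
-/

open Real Set

lemma hasDerivAt_log_sub_pade {y : ℝ} (hy : 0 < y) :
    HasDerivAt (fun y : ℝ => log y - 3 * (y ^ 2 - 1) / (y ^ 2 + 4 * y + 1))
      ((y - 1) ^ 4 / (y * (y ^ 2 + 4 * y + 1) ^ 2)) y := by
  have hden : y ^ 2 + 4 * y + 1 ≠ 0 := by positivity
  have hnum : HasDerivAt (fun y : ℝ => 3 * (y ^ 2 - 1)) (3 * (2 * y)) y := by
    simpa using ((hasDerivAt_pow 2 y).sub_const 1).const_mul 3
  have hden' : HasDerivAt (fun y : ℝ => y ^ 2 + 4 * y + 1) (2 * y + 4) y := by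
    simpa using ((hasDerivAt_pow 2 y).add ((hasDerivAt_id y).const_mul 4)).add_const 1
  refine ((hasDerivAt_log hy.ne').sub (hnum.div hden' hden)).congr_deriv ?_
  field_simp
  ring

lemma monotoneOn_log_sub_pade :
    MonotoneOn (fun y : ℝ => log y - 3 * (y ^ 2 - 1) / (y ^ 2 + 4 * y + 1)) (Ioi 0) := by
  have hderiv := fun y (hy : y ∈ Ioi (0 : ℝ)) => hasDerivAt_log_sub_pade hy
  refine monotoneOn_of_hasDerivWithinAt_nonneg (convex_Ioi 0)
    (fun y hy => (hderiv y hy).continuousAt.continuousWithinAt)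
    (fun y hy => (hderiv y (interior_subset hy)).hasDerivWithinAt) fun y hy => ?_
  have hy : 0 < y := interior_subset hy
  positivity

lemma log_le_pade_of_le_one {x : ℝ} (hx : 0 < x) (hx1 : x ≤ 1) :
    log x ≤ 3 * (x ^ 2 - 1) / (x ^ 2 + 4 * x + 1) := by
  have := monotoneOn_log_sub_pade (mem_Ioi.2 hx) (mem_Ioi.2 one_pos) hx1
  norm_num at this
  linarith

lemma pade_le_log_of_one_le {x : ℝ} (hx1 : 1 ≤ x) :
    3 * (x ^ 2 - 1) / (x ^ 2 + 4 * x + 1) ≤ log x := by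
  have := monotoneOn_log_sub_pade (mem_Ioi.2 one_pos) (mem_Ioi.2 (by linarith)) hx1
  norm_num at this
  linarith

lemma logMean_le {x : ℝ} (hx : 0 < x) (hx1 : x ≠ 1) :
    (x - 1) / log x ≤ (x ^ 2 + 4 * x + 1) / (3 * (x + 1)) := by
  set M := (x ^ 2 + 4 * x + 1) / (3 * (x + 1))
  have hM : 0 < M := by positivity
  have hMpade : M * (3 * (x ^ 2 - 1) / (x ^ 2 + 4 * x + 1)) = x - 1 := by
    simp only [M]
    field_simp
    ring
  rcases hx1.lt_or_gt with hlt | hgt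
  · rw [div_le_iff_of_neg (log_neg hx hlt), ← hMpade]
    exact mul_le_mul_of_nonneg_left (log_le_pade_of_le_one hx hlt.le) hM.le
  · rw [div_le_iff₀ (log_pos hgt), ← hMpade]
    exact mul_le_mul_of_nonneg_left (pade_le_log_of_one_le hgt.le) hM.le

lemma three_sq_le_of_le_pade {x L : ℝ} (hx : 0 < x) (hL : 0 < L)
    (hLM : L ≤ (x ^ 2 + 4 * x + 1) / (3 * (x + 1))) :
    3 * L ^ 2 ≤ (x + 1) * L + x := by
  set M := (x ^ 2 + 4 * x + 1) / (3 * (x + 1))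
  have hM : 0 < M := by positivity
  have hqM : 3 * M ^ 2 - (x + 1) * M - x = -x * (x - 1) ^ 2 / (3 * (x + 1) ^ 2) := by
    simp only [M]
    field_simp
    ring
  have hqM_nonpos : 3 * M ^ 2 - (x + 1) * M - x ≤ 0 := by
    rw [hqM, neg_mul, neg_div]
    exact neg_nonpos.2 (by positivity)
  -- convexity of `q` on `[0, M]`: `M q(L) - L q(M) - (M - L) q(0) = 3 L M (L - M)`
  nlinarith [mul_nonneg (mul_nonneg hL.le hM.le) (sub_nonneg.2 hLM),
    mul_nonneg hL.le (neg_nonneg.2 hqM_nonpos), mul_nonneg hx.le (sub_nonneg.2 hLM)]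

theorem log_mean_first_ineq (x : ℝ) (hx : 0 < x) (hx1 : x ≠ 1) :
    (((x - 1) / Real.log x) ^ 2 - x) / (2 * ((x - 1) / Real.log x) ^ 2) ≤
        ((x + 1) / 2 - (x - 1) / Real.log x) / ((x - 1) / Real.log x) ∧
      3 * ((x - 1) / Real.log x) ≤ 2 * ((x + 1) / 2) + x / ((x - 1) / Real.log x) := by
  set L := (x - 1) / log x
  have hL : 0 < L := div_pos_iff.2 <| by
    rcases hx1.lt_or_gt with hlt | hgt
    · exact Or.inr ⟨by linarith, log_neg hx hlt⟩
    · exact Or.inl ⟨by linarith, log_pos hgt⟩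
  have hquad : 3 * L ^ 2 ≤ (x + 1) * L + x := three_sq_le_of_le_pade hx hL (logMean_le hx hx1)
  constructor
  · rw [div_le_div_iff₀ (by positivity) hL]
    nlinarith
  · rw [← sub_le_iff_le_add', le_div_iff₀ hL]
    nlinarith
end

section
/- For every real x > 0 with x ≠ 1, one has (A(x,1) - L(x,1))/L(x,1) ≤ log K(x), where K is the Kantorovich constant. -/
/-!
With `A = (x + 1) / 2`, the claim follows from the sharper `(A - L) / L ≤ log A - (log x) / 2`,
which is half of `log K(x) = 2 log A - log x` and so at most `log K(x)`, because `K(x) ≥ 1`.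
Multiplied out, the sharper bound says that `x ↦ (x - 1) (log A + 1) - x log x` has the sign of
`x - 1`. That function vanishes at `1` and is monotone, since its derivative
`(x - 1) / (x + 1) - log (2x / (x + 1))` is nonnegative by `log y ≤ y - 1`.
-/

open Real Set

lemma hasDerivAt_sub_one_mul_log_arith_mean_sub_mul_log {x : ℝ} (hx : 0 < x) :
    HasDerivAt (fun t ↦ (t - 1) * (log ((t + 1) / 2) + 1) - t * log t)
      (log ((x + 1) / 2) + (x - 1) / (x + 1) - log x) x := by
  have hlogA : HasDerivAt (fun t ↦ log ((t + 1) / 2)) (1 / (x + 1)) x := by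
    convert (((hasDerivAt_id' x).add_const 1).div_const 2).log (by positivity) using 1
    field_simp
  refine ((((hasDerivAt_id' x).sub_const 1).mul (hlogA.add_const 1)).sub
    ((hasDerivAt_id' x).mul (hasDerivAt_log hx.ne'))).congr_deriv ?_
  field_simp
  ring

lemma log_sub_log_arith_mean_le {x : ℝ} (hx : 0 < x) :
    log x - log ((x + 1) / 2) ≤ (x - 1) / (x + 1) := by
  calc log x - log ((x + 1) / 2) = log (2 * x / (x + 1)) := by
        rw [← log_div hx.ne' (by positivity)]; congr 1; field_simp
    _ ≤ 2 * x / (x + 1) - 1 := log_le_sub_one_of_pos (by positivity)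
    _ = (x - 1) / (x + 1) := by field_simp; ring

lemma monotoneOn_sub_one_mul_log_arith_mean_sub_mul_log :
    MonotoneOn (fun t ↦ (t - 1) * (log ((t + 1) / 2) + 1) - t * log t) (Ioi 0) := by
  refine monotoneOn_of_hasDerivWithinAt_nonneg (convex_Ioi 0)
    (f' := fun x ↦ log ((x + 1) / 2) + (x - 1) / (x + 1) - log x)
    (fun x hx ↦ (hasDerivAt_sub_one_mul_log_arith_mean_sub_mul_log hx).continuousAt
      |>.continuousWithinAt) (fun x hx ↦ ?_) (fun x hx ↦ ?_)
  · rw [interior_Ioi] at hx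
    exact (hasDerivAt_sub_one_mul_log_arith_mean_sub_mul_log hx).hasDerivWithinAt
  · rw [interior_Ioi] at hx
    linarith [log_sub_log_arith_mean_le hx]

lemma div_sub_one_nonneg_sub_one_mul_log_arith_mean_sub_mul_log {x : ℝ} (hx : 0 < x) :
    0 ≤ ((x - 1) * (log ((x + 1) / 2) + 1) - x * log x) / (x - 1) := by
  have hmono := monotoneOn_sub_one_mul_log_arith_mean_sub_mul_log
  have h1 : (0 : ℝ) < 1 := one_pos
  rcases le_total x 1 with hle | hle
  · have := hmono hx h1 hle
    simp only [sub_self, zero_mul, log_one, mul_zero] at this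
    exact div_nonneg_of_nonpos this (by linarith)
  · have := hmono h1 (h1.trans_le hle) hle
    simp only [sub_self, zero_mul, log_one, mul_zero] at this
    exact div_nonneg this (by linarith)

lemma arith_log_mean_ratio_le_half_log_kantorovich {x : ℝ} (hx : 0 < x) (hx1 : x ≠ 1) :
    ((x + 1) / 2 - (x - 1) / log x) / ((x - 1) / log x) ≤ log ((x + 1) ^ 2 / (4 * x)) / 2 := by
  have hlog : log x ≠ 0 := log_ne_zero_of_pos_of_ne_one hx hx1
  have hsub : x - 1 ≠ 0 := sub_ne_zero.mpr hx1
  have hK : log ((x + 1) ^ 2 / (4 * x)) = 2 * log ((x + 1) / 2) - log x := by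
    rw [show (x + 1) ^ 2 / (4 * x) = ((x + 1) / 2) ^ 2 / x by ring,
      log_div (by positivity) hx.ne', log_pow]
    push_cast
    ring
  have hgap : ((x + 1) / 2 - (x - 1) / log x) / ((x - 1) / log x) =
      log ((x + 1) ^ 2 / (4 * x)) / 2 -
        ((x - 1) * (log ((x + 1) / 2) + 1) - x * log x) / (x - 1) := by
    rw [hK]
    field_simp
    ring
  linarith [div_sub_one_nonneg_sub_one_mul_log_arith_mean_sub_mul_log hx]

lemma one_le_kantorovich {x : ℝ} (hx : 0 < x) : 1 ≤ (x + 1) ^ 2 / (4 * x) := by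
  rw [one_le_div (by positivity)]
  nlinarith [sq_nonneg (x - 1)]

theorem arith_log_mean_ratio_le_log_kantorovich (x : ℝ) (hx : 0 < x) (hx1 : x ≠ 1) :
    ((x + 1) / 2 - (x - 1) / Real.log x) / ((x - 1) / Real.log x) ≤
      Real.log ((x + 1) ^ 2 / (4 * x)) := by
  have hlogK : 0 ≤ log ((x + 1) ^ 2 / (4 * x)) := log_nonneg (one_le_kantorovich hx)
  linarith [arith_log_mean_ratio_le_half_log_kantorovich hx hx1]
end

section
/- For every real x > 1, one has 1 - (x+1)·log x/(2(x - 1)) + log((x+1)²/(4x)) ≥ 0. -/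
/-!
Clearing the denominator `2 (x - 1)`, the claim is `0 ≤ F x` for
`F x = 2 (x - 1) (1 + log K(x)) - (x + 1) log x`. Both `F` and `F'` vanish at `x = 1`, and
`F'' x = (x - 1) (x² + 6x + 1) / (x² (x + 1)²) ≥ 0` on `[1, ∞)`, so integrating twice gives `F ≥ 0`.
-/

open Real Set

lemma nonneg_of_hasDerivAt_of_eq_zero {f f' : ℝ → ℝ} {a x : ℝ}
    (hf : ∀ y ∈ Ici a, HasDerivAt f (f' y) y) (ha : f a = 0) (hf' : ∀ y ∈ Ioi a, 0 ≤ f' y)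
    (hx : a ≤ x) : 0 ≤ f x := by
  have hmono : MonotoneOn f (Ici a) := by
    refine monotoneOn_of_hasDerivWithinAt_nonneg (f' := f') (convex_Ici a)
      (fun y hy ↦ (hf y hy).continuousAt.continuousWithinAt) (fun y hy ↦ ?_) (fun y hy ↦ ?_)
    · rw [interior_Ici] at hy ⊢
      exact (hf y (mem_Ici.2 (le_of_lt hy))).hasDerivWithinAt
    · rw [interior_Ici] at hy
      exact hf' y hy
  simpa [ha] using hmono self_mem_Ici hx hx

noncomputable def kantorovich (x : ℝ) : ℝ := (x + 1) ^ 2 / (4 * x)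

lemma kantorovich_one : kantorovich 1 = 1 := by norm_num [kantorovich]

lemma hasDerivAt_log_kantorovich {x : ℝ} (hx : 0 < x) :
    HasDerivAt (fun y ↦ log (kantorovich y)) ((x - 1) / (x * (x + 1))) x := by
  unfold kantorovich
  have hK := (((hasDerivAt_id' x).add_const 1).fun_pow 2).fun_div ((hasDerivAt_id' x).const_mul 4)
    (by positivity)
  convert hK.log (by positivity) using 1
  field_simp
  ring

noncomputable def kantorovichGap (x : ℝ) : ℝ :=
  2 * (x - 1) * (1 + log (kantorovich x)) - (x + 1) * log x

noncomputable def kantorovichGapDeriv (x : ℝ) : ℝ :=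
  2 * (1 + log (kantorovich x)) + 2 * (x - 1) ^ 2 / (x * (x + 1)) - log x - (x + 1) / x

lemma hasDerivAt_kantorovichGap {x : ℝ} (hx : 0 < x) :
    HasDerivAt kantorovichGap (kantorovichGapDeriv x) x := by
  refine (((((hasDerivAt_id' x).sub_const 1).const_mul 2).fun_mul
    ((hasDerivAt_log_kantorovich hx).const_add 1)).fun_sub
    (((hasDerivAt_id' x).add_const 1).fun_mul (hasDerivAt_log hx.ne'))).congr_deriv ?_
  rw [kantorovichGapDeriv]
  field_simp
  ring

lemma hasDerivAt_kantorovichGapDeriv {x : ℝ} (hx : 0 < x) :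
    HasDerivAt kantorovichGapDeriv ((x - 1) * (x ^ 2 + 6 * x + 1) / (x ^ 2 * (x + 1) ^ 2)) x := by
  have hq := ((((hasDerivAt_id' x).sub_const 1).fun_pow 2).const_mul 2).fun_div
    ((hasDerivAt_id' x).fun_mul ((hasDerivAt_id' x).add_const 1)) (by positivity)
  refine ((((((hasDerivAt_log_kantorovich hx).const_add 1).const_mul 2).fun_add hq).fun_sub
    (hasDerivAt_log hx.ne')).fun_sub
    (((hasDerivAt_id' x).add_const 1).fun_div (hasDerivAt_id' x) hx.ne')).congr_deriv ?_
  field_simp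
  ring

lemma kantorovichGap_nonneg {x : ℝ} (hx : 1 ≤ x) : 0 ≤ kantorovichGap x := by
  have hderiv : ∀ y, 1 ≤ y → 0 ≤ kantorovichGapDeriv y := fun y hy ↦
    nonneg_of_hasDerivAt_of_eq_zero
      (fun z hz ↦ hasDerivAt_kantorovichGapDeriv (zero_lt_one.trans_le hz))
      (by norm_num [kantorovichGapDeriv, kantorovich_one])
      (fun z (hz : 1 < z) ↦ by positivity) hy
  exact nonneg_of_hasDerivAt_of_eq_zero
    (fun y hy ↦ hasDerivAt_kantorovichGap (zero_lt_one.trans_le hy))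
    (by norm_num [kantorovichGap]) (fun y hy ↦ hderiv y (le_of_lt hy)) hx

theorem log_kantorovich_reformulation_ge (x : ℝ) (hx : 1 < x) :
    1 - (x + 1) * Real.log x / (2 * (x - 1)) + Real.log ((x + 1) ^ 2 / (4 * x)) ≥ 0 := by
  have hx1 : 0 < x - 1 := sub_pos.2 hx
  have hgap : 1 - (x + 1) * log x / (2 * (x - 1)) + log (kantorovich x)
      = kantorovichGap x / (2 * (x - 1)) := by
    unfold kantorovichGap
    field_simp
    ring
  rw [← kantorovich, hgap]
  exact div_nonneg (kantorovichGap_nonneg hx.le) (by positivity)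
end

section
/- For every real p with 0 < p < 1: if x > 1 then W_p(x,1) ≤ L(x,1)², and if 0 < x < 1 then W_p(x,1) ≥ L(x,1)². -/
/-!
Both comparisons come from the tangent-line bound `a log x ≤ x^a - 1`, i.e. `1 + t ≤ eᵗ`.
Writing `L(x,1)² = p(1-p)(x-1)² / (p(1-p) log² x)`, the two sides share a numerator, so only
the denominators `(x^p - 1)(x^(1-p) - 1)` and `p log x · (1-p) log x` need comparing. For `x > 1`
each factor dominates its tangent bound and both are nonnegative; for `x < 1` all four factors
are negative, the bounds reverse in absolute value, and so does the comparison.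
-/

open Real

namespace Real

variable {x a b : ℝ}

theorem mul_log_le_rpow_sub_one (hx : 0 < x) (a : ℝ) : a * log x ≤ x ^ a - 1 := by
  rw [rpow_def_of_pos hx, mul_comm]
  linarith [add_one_le_exp (log x * a)]

theorem mul_mul_log_sq_le_rpow_sub_one_mul (hx : 1 < x) (ha : 0 ≤ a) (hb : 0 ≤ b) :
    a * b * log x ^ 2 ≤ (x ^ a - 1) * (x ^ b - 1) := by
  have hx0 : 0 < x := by linarith
  have hlog : 0 ≤ log x := log_nonneg hx.le
  calc a * b * log x ^ 2 = (a * log x) * (b * log x) := by ring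
    _ ≤ (x ^ a - 1) * (x ^ b - 1) :=
      mul_le_mul (mul_log_le_rpow_sub_one hx0 a) (mul_log_le_rpow_sub_one hx0 b)
        (by positivity) (sub_nonneg.2 (one_le_rpow hx.le ha))

theorem rpow_sub_one_mul_le_mul_mul_log_sq (hx0 : 0 < x) (hx1 : x < 1) (ha : 0 ≤ a)
    (hb : 0 ≤ b) : (x ^ a - 1) * (x ^ b - 1) ≤ a * b * log x ^ 2 := by
  have hlog : log x ≤ 0 := log_nonpos hx0.le hx1.le
  calc (x ^ a - 1) * (x ^ b - 1) = (1 - x ^ a) * (1 - x ^ b) := by ring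
    _ ≤ (-(a * log x)) * (-(b * log x)) :=
      mul_le_mul (by linarith [mul_log_le_rpow_sub_one hx0 a])
        (by linarith [mul_log_le_rpow_sub_one hx0 b])
        (sub_nonneg.2 (rpow_le_one hx0.le hx1.le hb))
        (neg_nonneg.2 (mul_nonpos_of_nonneg_of_nonpos ha hlog))
    _ = a * b * log x ^ 2 := by ring

theorem rpow_sub_one_mul_pos_of_lt_one (hx0 : 0 < x) (hx1 : x < 1) (ha : 0 < a) (hb : 0 < b) :
    0 < (x ^ a - 1) * (x ^ b - 1) :=
  mul_pos_of_neg_of_neg (sub_neg.2 (rpow_lt_one hx0.le hx1 ha))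
    (sub_neg.2 (rpow_lt_one hx0.le hx1 hb))

end Real

theorem wyd_vs_log_mean_sq (p : ℝ) (hp0 : 0 < p) (hp1 : p < 1) :
    (∀ x : ℝ, 1 < x →
      p * (1 - p) * (x - 1) ^ 2 / ((x ^ p - 1) * (x ^ (1 - p) - 1)) ≤
        ((x - 1) / Real.log x) ^ 2) ∧
    (∀ x : ℝ, 0 < x → x < 1 →
      p * (1 - p) * (x - 1) ^ 2 / ((x ^ p - 1) * (x ^ (1 - p) - 1)) ≥
        ((x - 1) / Real.log x) ^ 2) := by
  have hq0 : 0 < 1 - p := sub_pos.2 hp1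
  have hc : 0 < p * (1 - p) := mul_pos hp0 hq0
  have log_mean_sq (x : ℝ) :
      ((x - 1) / log x) ^ 2 = p * (1 - p) * (x - 1) ^ 2 / (p * (1 - p) * log x ^ 2) := by
    rw [div_pow, mul_div_mul_left _ _ hc.ne']
  have hnum (x : ℝ) : 0 ≤ p * (1 - p) * (x - 1) ^ 2 := mul_nonneg hc.le (sq_nonneg _)
  constructor
  · intro x hx
    rw [log_mean_sq]
    exact div_le_div_of_nonneg_left (hnum x) (mul_pos hc (pow_pos (log_pos hx) 2))
      (mul_mul_log_sq_le_rpow_sub_one_mul hx hp0.le hq0.le)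
  · intro x hx0 hx1
    rw [ge_iff_le, log_mean_sq]
    exact div_le_div_of_nonneg_left (hnum x) (rpow_sub_one_mul_pos_of_lt_one hx0 hx1 hp0 hq0)
      (rpow_sub_one_mul_le_mul_mul_log_sq hx0 hx1 hp0.le hq0.le)
end

section
/- For every real x > 1 and every real p with 0 < p < 1, one has 4/((x^p + 1)(x^{1-p} + 1)) · L(x,1)² ≤ W_p(x,1) ≤ L(x,1)²/√x. -/
/-!
Put `y = x ^ p` and `z = x ^ (1 - p)`, so that `y z = x` and `log y · log z = p (1 - p) log² x`.
Then `W_p(x,1) / L(x,1)² = (log y / (y - 1)) · (log z / (z - 1))`, and each factor is squeezed by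
the classical comparison of the logarithmic mean `L(y,1)` with the geometric and arithmetic means,
`√y ≤ L(y,1) ≤ (y + 1) / 2`. In exponential form, with `y = eˢ`, these are `s/2 ≤ sinh (s/2)` and
`tanh (s/2) ≤ s/2`.
-/

open Real

theorem two_mul_exp_sub_one_le_mul_exp_add_one {s : ℝ} (hs : 0 ≤ s) :
    2 * (exp s - 1) ≤ s * (exp s + 1) := by
  let f : ℝ → ℝ := fun u ↦ u * (exp u + 1) - 2 * (exp u - 1)
  have hf' (u : ℝ) : HasDerivAt f ((u - 1) * exp u + 1) u :=
    (((hasDerivAt_id' u).mul ((hasDerivAt_exp u).add_const 1)).sub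
      (((hasDerivAt_exp u).sub_const 1).const_mul 2)).congr_deriv (by ring)
  -- `1 - u ≤ e⁻ᵘ`, multiplied by `eᵘ`
  have hf'_nonneg (u : ℝ) : 0 ≤ (u - 1) * exp u + 1 := by
    have h := mul_le_mul_of_nonneg_right (add_one_le_exp (-u)) (exp_pos u).le
    rw [← exp_add, neg_add_cancel, exp_zero] at h
    linarith
  have hf_mono : Monotone f := monotone_of_deriv_nonneg (fun u ↦ (hf' u).differentiableAt)
    (fun u ↦ (hf' u).deriv ▸ hf'_nonneg u)
  have h := hf_mono hs
  simp only [f, exp_zero] at h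
  linarith

theorem mul_exp_half_le_exp_sub_one {s : ℝ} (hs : 0 ≤ s) : s * exp (s / 2) ≤ exp s - 1 := by
  have h := mul_le_mul_of_nonneg_right (self_le_sinh_iff.2 (by positivity : 0 ≤ s / 2))
    (exp_pos (s / 2)).le
  have hsinh : 2 * sinh (s / 2) * exp (s / 2) = exp s - 1 := by
    have h1 : exp (s / 2) * exp (s / 2) = exp s := by rw [← exp_add, add_halves]
    have h2 : exp (-(s / 2)) * exp (s / 2) = 1 := by rw [← exp_add, neg_add_cancel, exp_zero]
    rw [sinh_eq]
    linear_combination h1 - h2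
  linarith

theorem two_mul_sub_one_le_add_one_mul_log {y : ℝ} (hy : 1 ≤ y) :
    2 * (y - 1) ≤ (y + 1) * log y := by
  have h := two_mul_exp_sub_one_le_mul_exp_add_one (log_nonneg hy)
  rwa [exp_log (by linarith), mul_comm (log y)] at h

theorem sqrt_mul_log_le_sub_one {y : ℝ} (hy : 1 ≤ y) : √y * log y ≤ y - 1 := by
  have hy0 : 0 < y := by linarith
  have h := mul_exp_half_le_exp_sub_one (log_nonneg hy)
  rwa [exp_log hy0, div_eq_mul_one_div, ← rpow_def_of_pos hy0, ← sqrt_eq_rpow, mul_comm] at h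

theorem wyd_log_mean_sq_bounds (x p : ℝ) (hx : 1 < x) (hp0 : 0 < p) (hp1 : p < 1) :
    4 / ((x ^ p + 1) * (x ^ (1 - p) + 1)) * ((x - 1) / Real.log x) ^ 2 ≤
        p * (1 - p) * (x - 1) ^ 2 / ((x ^ p - 1) * (x ^ (1 - p) - 1)) ∧
      p * (1 - p) * (x - 1) ^ 2 / ((x ^ p - 1) * (x ^ (1 - p) - 1)) ≤
        ((x - 1) / Real.log x) ^ 2 / Real.sqrt x := by
  have hx0 : 0 < x := by linarith
  set y := x ^ p with hy
  set z := x ^ (1 - p) with hz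
  have hy1 : 1 < y := one_lt_rpow hx hp0
  have hz1 : 1 < z := one_lt_rpow hx (by linarith)
  have hlog : p * (1 - p) * log x ^ 2 = log y * log z := by
    rw [hy, hz, log_rpow hx0, log_rpow hx0]; ring
  have hsqrt : √x = √y * √z := by
    rw [← sqrt_mul (by positivity), hy, hz, ← rpow_add hx0, add_sub_cancel, rpow_one]
  have hlx : 0 < log x := log_pos hx
  have hly : 0 < log y := log_pos hy1
  have hlz : 0 < log z := log_pos hz1
  constructor
  · have key := mul_le_mul (two_mul_sub_one_le_add_one_mul_log hy1.le)
      (two_mul_sub_one_le_add_one_mul_log hz1.le) (by linarith) (by positivity)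
    rw [div_pow, div_mul_div_comm, div_le_div_iff₀ (by positivity) (by nlinarith)]
    linear_combination (x - 1) ^ 2 * key - (x - 1) ^ 2 * (y + 1) * (z + 1) * hlog
  · have key := mul_le_mul (sqrt_mul_log_le_sub_one hy1.le) (sqrt_mul_log_le_sub_one hz1.le)
      (by positivity) (by linarith)
    rw [div_pow, div_div, div_le_div_iff₀ (by nlinarith) (by positivity), hsqrt]
    linear_combination (x - 1) ^ 2 * key + (x - 1) ^ 2 * √y * √z * hlog
end
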